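/- An HJ continued fraction [e_1,...,e_r] with all e_i ≥ 2 admits a zero continued fraction of weight 0 if and only if it is the dual of a Wahl chain, i.e., it is the HJ expansion of n²/(n²-na+1) for some coprime 0 < a < n. -/

import Mathlib

/-- The value of a Hirzebruch–Jung continued fraction `[e₁,…,e_r]`,
computed as `e₁ - 1/[e₂,…,e_r]` with `[e_r] = e_r`. -/
def hjVal : List ℤ → ℚ
  | [] => 0
  | [x] => (x : ℚ)
  | x :: y :: xs => (x : ℚ) - (hjVal (y :: xs))⁻¹

/-- `IsHJ m q L` : `L` is the HJ continued fraction expansion of `m/q`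
(all entries at least 2 and value `m/q`). -/
def IsHJ (m q : ℤ) (L : List ℤ) : Prop :=
  (∀ e ∈ L, 2 ≤ e) ∧ hjVal L = (m : ℚ) / (q : ℚ)

/-- `IsWahlChain n a L` : `L` is the Wahl chain of `n²/(na-1)` for coprime `0 < a < n`. -/
def IsWahlChain (n a : ℤ) (L : List ℤ) : Prop :=
  0 < a ∧ a < n ∧ Int.gcd n a = 1 ∧ IsHJ (n ^ 2) (n * a - 1) L

/-- One blow-down move on a chain: `[…,u,1,v,…] ↦ […,u-1,v-1,…]`,
including the boundary cases `[1,v,…] ↦ [v-1,…]` and `[…,u,1] ↦ […,u-1]`. -/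
inductive BDStep : List ℤ → List ℤ → Prop
  | mid (l r : List ℤ) (u v : ℤ) :
      BDStep (l ++ u :: 1 :: v :: r) (l ++ (u - 1) :: (v - 1) :: r)
  | left (r : List ℤ) (v : ℤ) : BDStep (1 :: v :: r) ((v - 1) :: r)
  | right (l : List ℤ) (u : ℤ) : BDStep (l ++ [u, 1]) (l ++ [u - 1])

/-- A zero continued fraction: a chain that blows down to `[1,1]`. -/
def IsZCF (L : List ℤ) : Prop :=
  Relation.ReflTransGen BDStep L [1, 1]

/-- `AdmitsZCF L lam` : one can decrease some entries of `L` by positive integers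
with total sum `lam + 1` so that the result is a zero continued fraction. -/
def AdmitsZCF (L : List ℤ) (lam : ℤ) : Prop :=
  ∃ K : List ℤ, K.length = L.length ∧ (∀ i : ℕ, K.getD i 0 ≤ L.getD i 0) ∧
    L.sum - K.sum = lam + 1 ∧ IsZCF K

/-! Multiplying out `!![e, -1; 1, 0]` along a chain gives a matrix of determinant 1 whose first
column is the numerator and denominator of its HJ value. Every blow-down preserves the first
column `(0, 1)` of `[1, 1]`, so a weight-zero zero continued fraction of `L` has the form
`A ++ 1 :: B` with `L = A ++ 2 :: B`; solving for the first column of `B` with the adjugate of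
`hjProd A` shows that the first column of `hjProd L` is `(n², n c + 1)`, where `(n, c)` is the
first column of `hjProd A`. Conversely, dual Wahl chains are built from `[2, 2, 2]` by two
growth moves that carry along a zero continued fraction (using only interior blow-downs) of
the chain with one entry lowered, and HJ expansions are unique. -/

abbrev Mat2 := Matrix (Fin 2) (Fin 2) ℤ

def hjMat (e : ℤ) : Mat2 := !![e, -1; 1, 0]

def hjProd (L : List ℤ) : Mat2 := (L.map hjMat).prod

@[simp] lemma hjProd_nil : hjProd [] = 1 := rfl

@[simp] lemma hjProd_cons (e : ℤ) (L : List ℤ) : hjProd (e :: L) = hjMat e * hjProd L := rfl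

@[simp] lemma hjProd_append (A B : List ℤ) : hjProd (A ++ B) = hjProd A * hjProd B := by
  simp [hjProd]

lemma det_hjProd (L : List ℤ) : (hjProd L).det = 1 := by
  induction L with
  | nil => simp
  | cons e L ih => rw [hjProd_cons, Matrix.det_mul, ih]; simp [hjMat]

lemma hjProd_cons_first_col (e : ℤ) (L : List ℤ) :
    hjProd (e :: L) 0 0 = e * hjProd L 0 0 - hjProd L 1 0 ∧
      hjProd (e :: L) 1 0 = hjProd L 0 0 := by
  simp [hjMat, Matrix.mul_apply, Fin.sum_univ_two, sub_eq_add_neg]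

lemma hjProd_first_col_bounds (L : List ℤ) (hL : ∀ e ∈ L, 2 ≤ e) :
    0 ≤ hjProd L 1 0 ∧ hjProd L 1 0 < hjProd L 0 0 := by
  induction L with
  | nil => simp
  | cons e L ih =>
    obtain ⟨h0, h1⟩ := ih fun x hx => hL x (by simp [hx])
    have he : 2 ≤ e := hL e (by simp)
    obtain ⟨c0, c1⟩ := hjProd_cons_first_col e L
    rw [c0, c1]
    constructor <;> nlinarith

lemma hjVal_cons (e : ℤ) (L : List ℤ) : hjVal (e :: L) = e - (hjVal L)⁻¹ := by
  cases L <;> simp [hjVal]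

lemma hjVal_eq_div (L : List ℤ) (hL : ∀ e ∈ L, 2 ≤ e) :
    hjVal L = hjProd L 0 0 / hjProd L 1 0 := by
  induction L with
  | nil => simp [hjVal]
  | cons e L ih =>
    have hL' : ∀ x ∈ L, 2 ≤ x := fun x hx => hL x (by simp [hx])
    have hp : (hjProd L 0 0 : ℚ) ≠ 0 := by
      have := hjProd_first_col_bounds L hL'
      exact_mod_cast (by omega : hjProd L 0 0 ≠ 0)
    obtain ⟨c0, c1⟩ := hjProd_cons_first_col e L
    rw [hjVal_cons, ih hL', c0, c1, inv_div]
    push_cast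
    field_simp

lemma inv_hjVal_mem_Ico (L : List ℤ) (hL : ∀ e ∈ L, 2 ≤ e) :
    (hjVal L)⁻¹ ∈ Set.Ico 0 1 := by
  obtain ⟨h0, h1⟩ := hjProd_first_col_bounds L hL
  rw [hjVal_eq_div L hL, inv_div, Set.mem_Ico, div_lt_one (by exact_mod_cast (by omega))]
  exact ⟨div_nonneg (by exact_mod_cast h0) (by exact_mod_cast (by omega)), by exact_mod_cast h1⟩

lemma ceil_hjVal_cons (e : ℤ) (L : List ℤ) (hL : ∀ x ∈ L, 2 ≤ x) :
    ⌈hjVal (e :: L)⌉ = e := by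
  obtain ⟨h0, h1⟩ := inv_hjVal_mem_Ico L hL
  rw [hjVal_cons, Int.ceil_eq_iff]
  constructor <;> linarith

lemma hjVal_cons_ne_zero {e : ℤ} {L : List ℤ} (he : 2 ≤ e) (hL : ∀ x ∈ L, 2 ≤ x) :
    hjVal (e :: L) ≠ 0 := by
  intro h
  have := ceil_hjVal_cons e L hL
  rw [h, Int.ceil_zero] at this
  omega

lemma eq_of_hjVal_eq {L L' : List ℤ} (hL : ∀ e ∈ L, 2 ≤ e) (hL' : ∀ e ∈ L', 2 ≤ e)
    (h : hjVal L = hjVal L') : L = L' := by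
  induction L generalizing L' with
  | nil =>
    cases L' with
    | nil => rfl
    | cons e' T' =>
      exact absurd h.symm (hjVal_cons_ne_zero (hL' e' (by simp)) fun x hx => hL' x (by simp [hx]))
  | cons e T ih =>
    have hT : ∀ x ∈ T, 2 ≤ x := fun x hx => hL x (by simp [hx])
    cases L' with
    | nil => exact absurd h (hjVal_cons_ne_zero (hL e (by simp)) hT)
    | cons e' T' =>
      have hT' : ∀ x ∈ T', 2 ≤ x := fun x hx => hL' x (by simp [hx])
      have he : e = e' := by rw [← ceil_hjVal_cons e T hT, h, ceil_hjVal_cons e' T' hT']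
      subst he
      rw [hjVal_cons, hjVal_cons, sub_right_inj, inv_inj] at h
      rw [ih hT hT' h]

lemma BDStep.one_mem {S T : List ℤ} (h : BDStep S T) : (1 : ℤ) ∈ S := by
  cases h <;> simp

lemma IsZCF.one_mem {K : List ℤ} (h : IsZCF K) : (1 : ℤ) ∈ K := by
  rcases h.cases_head with rfl | ⟨_, hs, _⟩
  · simp
  · exact hs.one_mem

lemma hjMat_mul_one_mul (u v : ℤ) :
    hjMat u * hjMat 1 * hjMat v = hjMat (u - 1) * hjMat (v - 1) := by
  ext i j; fin_cases i <;> fin_cases j <;> simp [hjMat, Matrix.mul_apply, Fin.sum_univ_two] <;> ring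

lemma hjMat_one_mul (v : ℤ) : hjMat 1 * hjMat v = !![1, 0; 1, 1] * hjMat (v - 1) := by
  ext i j; fin_cases i <;> fin_cases j <;> simp [hjMat, Matrix.mul_apply, Fin.sum_univ_two]; ring

lemma hjMat_mul_one (u : ℤ) : hjMat u * hjMat 1 = hjMat (u - 1) * !![1, -1; 0, 1] := by
  ext i j; fin_cases i <;> fin_cases j <;> simp [hjMat, Matrix.mul_apply, Fin.sum_univ_two] <;> ring

/-- Blow-downs change `hjProd` only by unipotent factors that preserve `(0, 1)` as first column. -/
lemma BDStep.hjProd_first_col {S T : List ℤ} (h : BDStep S T)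
    (hT : hjProd T 0 0 = 0 ∧ hjProd T 1 0 = 1) : hjProd S 0 0 = 0 ∧ hjProd S 1 0 = 1 := by
  obtain ⟨h0, h1⟩ := hT
  cases h with
  | mid l r u v =>
    have : hjProd (l ++ u :: 1 :: v :: r) = hjProd (l ++ (u - 1) :: (v - 1) :: r) := by
      simp only [hjProd_append, hjProd_cons]
      rw [← mul_assoc (hjMat u), ← mul_assoc (hjMat u * hjMat 1), hjMat_mul_one_mul, mul_assoc]
    rw [this]
    exact ⟨h0, h1⟩
  | left r v =>
    have : hjProd (1 :: v :: r) = !![1, 0; 1, 1] * hjProd ((v - 1) :: r) := by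
      simp only [hjProd_cons, ← mul_assoc, hjMat_one_mul]
    simp only [this, Matrix.mul_apply, Fin.sum_univ_two, h0, h1]
    simp
  | right l u =>
    have : hjProd (l ++ [u, 1]) = hjProd (l ++ [u - 1]) * !![1, -1; 0, 1] := by
      simp only [hjProd_append, hjProd_cons, hjProd_nil, mul_one, mul_assoc, hjMat_mul_one]
    simp only [this, Matrix.mul_apply, Fin.sum_univ_two, h0, h1]
    simp

lemma IsZCF.hjProd_first_col {K : List ℤ} (h : IsZCF K) :
    hjProd K 0 0 = 0 ∧ hjProd K 1 0 = 1 := by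
  induction h using Relation.ReflTransGen.head_induction_on with
  | refl => simp [hjMat, Matrix.mul_apply, Fin.sum_univ_two]
  | head hs _ ih => exact hs.hjProd_first_col ih

def OneBelow (K L : List ℤ) : Prop :=
  ∃ A B : List ℤ, ∃ u : ℤ, K = A ++ u :: B ∧ L = A ++ (u + 1) :: B

lemma forall₂_le_iff_getD {K L : List ℤ} :
    List.Forall₂ (· ≤ ·) K L ↔
      K.length = L.length ∧ ∀ i, K.getD i 0 ≤ L.getD i 0 := by
  induction K generalizing L with
  | nil => cases L <;> simp
  | cons k K ih =>
    cases L with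
    | nil => simp
    | cons l L =>
      rw [List.forall₂_cons, ih, List.length_cons, List.length_cons, Nat.add_right_cancel_iff,
        ← Nat.and_forall_add_one (p := fun i => (k :: K).getD i 0 ≤ (l :: L).getD i 0)]
      simp only [List.getD_cons_zero, List.getD_cons_succ]
      tauto

lemma List.Forall₂.eq_of_sum_le {K L : List ℤ} (h : List.Forall₂ (· ≤ ·) K L)
    (hs : L.sum ≤ K.sum) : K = L := by
  induction h with
  | nil => rfl
  | cons hkl hKL ih =>
    have := hKL.sum_le_sum
    simp only [List.sum_cons] at hs
    rw [le_antisymm hkl (by linarith), ih (by linarith)]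

lemma List.Forall₂.oneBelow {K L : List ℤ} (h : List.Forall₂ (· ≤ ·) K L)
    (hs : L.sum = K.sum + 1) : OneBelow K L := by
  induction h with
  | nil => simp at hs
  | @cons k l K L hkl hKL ih =>
    have := hKL.sum_le_sum
    simp only [List.sum_cons] at hs
    obtain rfl | hlt := hkl.eq_or_lt
    · obtain ⟨A, B, u, rfl, rfl⟩ := ih (by linarith)
      exact ⟨k :: A, B, u, rfl, rfl⟩
    · obtain rfl := hKL.eq_of_sum_le (by linarith)
      obtain rfl : l = k + 1 := by linarith
      exact ⟨[], K, k, rfl, rfl⟩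

lemma OneBelow.forall₂ {K L : List ℤ} (h : OneBelow K L) : List.Forall₂ (· ≤ ·) K L := by
  obtain ⟨A, B, u, rfl, rfl⟩ := h
  exact List.rel_append (List.forall₂_refl A) (.cons (by simp) (List.forall₂_refl B))

lemma admitsZCF_zero_iff {L : List ℤ} : AdmitsZCF L 0 ↔ ∃ K, OneBelow K L ∧ IsZCF K := by
  constructor
  · rintro ⟨K, hlen, hle, hsum, hK⟩
    exact ⟨K, (forall₂_le_iff_getD.2 ⟨hlen, hle⟩).oneBelow (by linarith), hK⟩
  · rintro ⟨K, hKL, hK⟩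
    obtain ⟨hlen, hle⟩ := forall₂_le_iff_getD.1 hKL.forall₂
    obtain ⟨A, B, u, rfl, rfl⟩ := hKL
    exact ⟨_, hlen, hle, by simp, hK⟩

lemma hjProd_append_cons (A B : List ℤ) (u : ℤ) :
    hjProd (A ++ u :: B) = hjProd A * hjMat u * hjProd B := by
  simp [mul_assoc]

lemma OneBelow.exists_eq_one {K L : List ℤ} (hKL : OneBelow K L) (hK : IsZCF K)
    (hL : ∀ e ∈ L, 2 ≤ e) : ∃ A B : List ℤ, K = A ++ 1 :: B ∧ L = A ++ 2 :: B := by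
  obtain ⟨A, B, u, rfl, rfl⟩ := hKL
  have hu : 1 ≤ u := by linarith [hL (u + 1) (by simp)]
  have h1 := hK.one_mem
  simp only [List.mem_append, List.mem_cons] at h1
  obtain h1 | rfl | h1 := h1
  · linarith [hL 1 (by simp [h1])]
  · exact ⟨A, B, rfl, rfl⟩
  · linarith [hL 1 (by simp [h1])]

lemma mul_hjMat_mul_apply_zero (M N : Mat2) (u : ℤ) (i : Fin 2) :
    (M * hjMat u * N) i 0 = M i 0 * (u * N 0 0 - N 1 0) + M i 1 * N 0 0 := by
  simp only [hjMat, Matrix.mul_apply, Fin.sum_univ_two, Matrix.of_apply, Matrix.cons_val',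
    Matrix.cons_val_zero, Matrix.cons_val_one, Matrix.cons_val_fin_one]
  ring

/-- The first column of `N` is forced to be `adj M (0, 1)`. -/
lemma hjMat_two_first_col {M N : Mat2} (hM : M.det = 1)
    (h0 : (M * hjMat 1 * N) 0 0 = 0) (h1 : (M * hjMat 1 * N) 1 0 = 1) :
    (M * hjMat 2 * N) 0 0 = M 0 0 ^ 2 ∧ (M * hjMat 2 * N) 1 0 = M 0 0 * M 1 0 + 1 := by
  rw [Matrix.det_fin_two] at hM
  simp only [mul_hjMat_mul_apply_zero] at h0 h1 ⊢
  have hp : N 0 0 = M 0 0 := by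
    linear_combination -(N 0 0 * hM) + M 0 0 * h1 - M 1 0 * h0
  have hq : N 1 0 = M 0 0 + M 0 1 := by
    linear_combination (N 0 0 - N 1 0) * hM - M 1 1 * h0 + M 0 1 * h1 + hp
  constructor
  · linear_combination (2 * M 0 0 + M 0 1) * hp - M 0 0 * hq
  · linear_combination (2 * M 1 0 + M 1 1) * hp - M 1 0 * hq + hM

lemma exists_isHJ_of_oneBelow_isZCF {K L : List ℤ} (hKL : OneBelow K L) (hK : IsZCF K)
    (hL : ∀ e ∈ L, 2 ≤ e) :
    ∃ n a : ℤ, 0 < a ∧ a < n ∧ Int.gcd n a = 1 ∧ IsHJ (n ^ 2) (n ^ 2 - n * a + 1) L := by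
  obtain ⟨A, B, rfl, rfl⟩ := hKL.exists_eq_one hK hL
  obtain ⟨h0, h1⟩ := hK.hjProd_first_col
  rw [hjProd_append_cons] at h0 h1
  have hdet := det_hjProd A
  obtain ⟨c0, c1⟩ := hjMat_two_first_col hdet h0 h1
  rw [Matrix.det_fin_two] at hdet
  have hA := hjProd_first_col_bounds A fun e he => hL e (by simp [he])
  have hL' := hjProd_first_col_bounds _ hL
  rw [hjProd_append_cons, c0, c1] at hL'
  set n := hjProd A 0 0
  set c := hjProd A 1 0
  -- `c = 0` would force `n = 1` by the determinant, and then `1 < n ^ 2` fails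
  have hc : 0 < c := by
    refine lt_of_le_of_ne hA.1 fun hc0 => ?_
    rw [← hc0, mul_zero, sub_zero] at hdet
    have hn1 : n = 1 := Int.eq_one_of_mul_eq_one_right (by omega) hdet
    rw [← hc0, hn1] at hL'
    omega
  refine ⟨n, n - c, by omega, by omega, ?_, hL, ?_⟩
  · rw [← Int.isCoprime_iff_gcd_eq_one]
    exact ⟨hjProd A 1 1 - hjProd A 0 1, hjProd A 0 1, by linear_combination hdet⟩
  · rw [hjVal_eq_div _ hL, hjProd_append_cons, c0, c1]
    push_cast
    ring

inductive MidBDStep : List ℤ → List ℤ → Prop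
  | mk (l r : List ℤ) (u v : ℤ) :
      MidBDStep (l ++ u :: 1 :: v :: r) (l ++ (u - 1) :: (v - 1) :: r)

def IsMidZCF (K : List ℤ) : Prop :=
  Relation.ReflTransGen MidBDStep K [1, 1]

lemma MidBDStep.bdStep {S T : List ℤ} (h : MidBDStep S T) : BDStep S T := by
  obtain ⟨l, r, u, v⟩ := h
  exact .mid l r u v

lemma IsMidZCF.isZCF {K : List ℤ} (h : IsMidZCF K) : IsZCF K :=
  Relation.ReflTransGen.mono (fun _ _ => MidBDStep.bdStep) _ _ h

lemma MidBDStep.reverse {S T : List ℤ} (h : MidBDStep S T) : MidBDStep S.reverse T.reverse := by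
  obtain ⟨l, r, u, v⟩ := h
  simpa using MidBDStep.mk r.reverse l.reverse v u

lemma IsMidZCF.reverse {K : List ℤ} (h : IsMidZCF K) : IsMidZCF K.reverse :=
  Relation.ReflTransGen.lift List.reverse (fun _ _ => MidBDStep.reverse) _ _ h

lemma OneBelow.reverse {K L : List ℤ} (h : OneBelow K L) : OneBelow K.reverse L.reverse := by
  obtain ⟨A, B, u, rfl, rfl⟩ := h
  exact ⟨B.reverse, A.reverse, u, by simp, by simp⟩

def growHead (L : List ℤ) : List ℤ := L.modifyHead (· + 1) ++ [2]

def growLast (L : List ℤ) : List ℤ := 2 :: L.modifyLast (· + 1)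

@[simp] lemma growHead_cons (x : ℤ) (L : List ℤ) :
    growHead (x :: L) = (x + 1) :: (L ++ [2]) := rfl

lemma growLast_eq_reverse (L : List ℤ) : growLast L = (growHead L.reverse).reverse := by
  rcases L.eq_nil_or_concat with rfl | ⟨L, x, rfl⟩
  · rfl
  · simp [growLast, growHead, List.modifyLast_concat]

lemma two_le_of_mem_growHead {L : List ℤ} (hL : ∀ e ∈ L, 2 ≤ e) :
    ∀ e ∈ growHead L, 2 ≤ e := by
  cases L with
  | nil => simp [growHead]
  | cons x L =>
    have := hL x (by simp)
    simp only [growHead_cons, List.mem_cons, List.mem_append, List.not_mem_nil, or_false]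
    rintro e (rfl | he | rfl)
    · omega
    · exact hL e (by simp [he])
    · rfl

lemma two_le_of_mem_growLast {L : List ℤ} (hL : ∀ e ∈ L, 2 ≤ e) :
    ∀ e ∈ growLast L, 2 ≤ e := by
  rw [growLast_eq_reverse]
  simpa using two_le_of_mem_growHead (L := L.reverse) (by simpa using hL)

lemma MidBDStep.growHead {S T : List ℤ} (h : MidBDStep S T) :
    MidBDStep (growHead S) (growHead T) := by
  obtain ⟨l, r, u, v⟩ := h
  cases l with
  | nil =>
    convert MidBDStep.mk [] (r ++ [2]) (u + 1) v using 1 <;> simp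
  | cons x l => simpa using MidBDStep.mk ((x + 1) :: l) (r ++ [2]) u v

lemma IsMidZCF.growHead {K : List ℤ} (h : IsMidZCF K) : IsMidZCF (growHead K) :=
  (Relation.ReflTransGen.lift _root_.growHead (fun _ _ => MidBDStep.growHead) _ _ h).tail
    (by simpa using MidBDStep.mk [] [] 2 2)

lemma IsMidZCF.growLast {K : List ℤ} (h : IsMidZCF K) : IsMidZCF (growLast K) := by
  rw [growLast_eq_reverse]
  exact h.reverse.growHead.reverse

lemma OneBelow.growHead {K L : List ℤ} (h : OneBelow K L) :
    OneBelow (growHead K) (growHead L) := by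
  obtain ⟨A, B, u, rfl, rfl⟩ := h
  cases A with
  | nil => exact ⟨[], B ++ [2], u + 1, by simp, by simp⟩
  | cons x A => exact ⟨(x + 1) :: A, B ++ [2], u, by simp, by simp⟩

lemma OneBelow.growLast {K L : List ℤ} (h : OneBelow K L) :
    OneBelow (growLast K) (growLast L) := by
  rw [growLast_eq_reverse, growLast_eq_reverse]
  exact h.reverse.growHead.reverse

lemma hjProd_growHead {L : List ℤ} (hL : L ≠ []) :
    hjProd (growHead L) = !![1, 1; 0, 1] * hjProd L * hjMat 2 := by
  obtain ⟨x, L, rfl⟩ := List.exists_cons_of_ne_nil hL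
  have : hjMat (x + 1) = !![1, 1; 0, 1] * hjMat x := by
    ext i j; fin_cases i <;> fin_cases j <;> simp [hjMat, Matrix.mul_apply, Fin.sum_univ_two]
  simp [this, mul_assoc]

lemma hjProd_growLast {L : List ℤ} (hL : L ≠ []) :
    hjProd (growLast L) = hjMat 2 * hjProd L * !![1, 0; -1, 1] := by
  obtain ⟨L, x, rfl⟩ := (L.eq_nil_or_concat).resolve_left hL
  have : hjMat (x + 1) = hjMat x * !![1, 0; -1, 1] := by
    ext i j; fin_cases i <;> fin_cases j <;> simp [hjMat, Matrix.mul_apply, Fin.sum_univ_two]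
  simp [growLast, List.modifyLast_concat, this, mul_assoc]

/-- The value `hjProd` takes on the dual Wahl chain of `n²/(n² - na + 1)`, written with
`b = n - a`. -/
def dualWahlMat (n b : ℤ) : Mat2 :=
  !![n ^ 2, -(n * (n - b) + 1); n * b + 1, -((n - b) * b + 1)]

lemma dualWahlMat_growHead (n b : ℤ) :
    !![1, 1; 0, 1] * dualWahlMat (n - b) b * hjMat 2 = dualWahlMat n b := by
  ext i j
  fin_cases i <;> fin_cases j <;>
    simp [dualWahlMat, hjMat, Matrix.mul_apply, Fin.sum_univ_two] <;> ring

lemma dualWahlMat_growLast (n b : ℤ) :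
    hjMat 2 * dualWahlMat b (2 * b - n) * !![1, 0; -1, 1] = dualWahlMat n b := by
  ext i j
  fin_cases i <;> fin_cases j <;>
    simp [dualWahlMat, hjMat, Matrix.mul_apply, Fin.sum_univ_two] <;> ring

lemma exists_dualWahl_chain (n b : ℤ) (hb : 0 < b) (hbn : b < n) (hnb : IsCoprime n b) :
    ∃ L K : List ℤ, L ≠ [] ∧ (∀ e ∈ L, 2 ≤ e) ∧ hjProd L = dualWahlMat n b ∧
      OneBelow K L ∧ IsMidZCF K := by
  obtain ⟨x, y, hxy⟩ := hnb
  rcases lt_trichotomy (2 * b) n with hlt | heq | hgt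
  · obtain ⟨L, K, hne, h2, hmat, hKL, hK⟩ :=
      exists_dualWahl_chain (n - b) b hb (by omega) ⟨x, x + y, by linear_combination hxy⟩
    refine ⟨growHead L, growHead K, by simp [growHead], two_le_of_mem_growHead h2, ?_,
      hKL.growHead, hK.growHead⟩
    rw [hjProd_growHead hne, hmat, dualWahlMat_growHead]
  · obtain rfl : b = 1 := by
      have : b ∣ 1 := ⟨2 * x + y, by linear_combination -hxy - x * heq⟩
      have := Int.le_of_dvd one_pos this
      omega
    obtain rfl : n = 2 := by omega
    refine ⟨[2, 2, 2], [2, 1, 2], by simp, by simp, ?_, ⟨[2], [2], 1, rfl, rfl⟩, ?_⟩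
    · ext i j
      fin_cases i <;> fin_cases j <;> simp [dualWahlMat, hjMat, Matrix.mul_apply, Fin.sum_univ_two]
    · exact .single (by simpa using MidBDStep.mk [] [] 2 2)
  · obtain ⟨L, K, hne, h2, hmat, hKL, hK⟩ :=
      exists_dualWahl_chain b (2 * b - n) (by omega) (by omega)
        ⟨2 * x + y, -x, by linear_combination hxy⟩
    refine ⟨growLast L, growLast K, by simp [growLast], two_le_of_mem_growLast h2, ?_,
      hKL.growLast, hK.growLast⟩
    rw [hjProd_growLast hne, hmat, dualWahlMat_growLast]
termination_by n.toNat
decreasing_by all_goals omega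

/-- A chain with entries ≥ 2 admits a zero continued fraction of weight 0
iff it is the dual of a Wahl chain, i.e. the expansion of `n²/(n²-na+1)`. -/
theorem stmt4 (L : List ℤ) (hL : ∀ e ∈ L, 2 ≤ e) :
    AdmitsZCF L 0 ↔
      ∃ n a : ℤ, 0 < a ∧ a < n ∧ Int.gcd n a = 1 ∧
        IsHJ (n ^ 2) (n ^ 2 - n * a + 1) L := by
  constructor
  · intro h
    obtain ⟨K, hKL, hK⟩ := admitsZCF_zero_iff.1 h
    exact exists_isHJ_of_oneBelow_isZCF hKL hK hL
  · rintro ⟨n, a, ha, han, hgcd, -, hval⟩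
    obtain ⟨x, y, hxy⟩ := Int.isCoprime_iff_gcd_eq_one.2 hgcd
    have hcop : IsCoprime n (n - a) := ⟨x + y, -y, by linear_combination hxy⟩
    obtain ⟨L₀, K, -, h2, hmat, hKL, hK⟩ :=
      exists_dualWahl_chain n (n - a) (by omega) (by omega) hcop
    obtain rfl : L = L₀ := by
      refine eq_of_hjVal_eq hL h2 ?_
      rw [hval, hjVal_eq_div _ h2, hmat]
      rw [show dualWahlMat n (n - a) 0 0 = n ^ 2 from rfl,
        show dualWahlMat n (n - a) 1 0 = n * (n - a) + 1 from rfl]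
      push_cast
      ring
    exact admitsZCF_zero_iff.2 ⟨K, hKL, hK.isZCF⟩
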